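/- arXiv:1211.4674 — 5 statements merged into one kernel-verified Lean document; each statement's English description precedes it below -/
import Mathlib

section
/- With n sensors placed independently and uniformly at random in [0,1], each with radio range r_s(n) = (c log n)/n for sufficiently large constant c, and M arbitrarily placed transmitters, the probability that the recovered whitespace A_void satisfies 1 - A_void ≤ 3M·(c log n)/n tends to 1 as n → ∞. -/
/-! Cut `[0,1]` into `K = ⌈2/r⌉` cells of width at most `r/2`. If every cell holds a sensor,
every point of `[0,1]` is within `r/2` of a sensor, so a point at distance more than `3r/2` from
all transmitters lies in the range of a silent sensor: the unrecovered part of `[0,1]` is covered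
by the `M` intervals of length `3r` around the transmitters. A fixed cell is empty with probability
`(1 - 1/K)ⁿ ≤ e^{-n/K} ≤ n^{-c/3}`, and a union bound over the `K ≤ n` cells leaves a failure
probability of at most `n^{1-c/3} → 0` once `c > 3`. -/

open MeasureTheory ProbabilityTheory Filter Set

def gridCell (K k : ℕ) : Set ℝ := Icc ((k : ℝ) / K) ((k + 1 : ℝ) / K)

lemma exists_lt_mem_gridCell {K : ℕ} (hK : 0 < K) {x : ℝ} (hx : x ∈ Icc (0 : ℝ) 1) :
    ∃ k < K, x ∈ gridCell K k := by
  have hK' : (0 : ℝ) < K := by exact_mod_cast hK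
  rcases hx.2.lt_or_eq with hx1 | rfl
  · have hxK : 0 ≤ x * K := by nlinarith [hx.1]
    refine ⟨⌊x * K⌋₊, (Nat.floor_lt hxK).2 (by nlinarith), ?_, ?_⟩
    · rw [div_le_iff₀ hK']; exact Nat.floor_le hxK
    · rw [le_div_iff₀ hK']; exact (Nat.lt_floor_add_one _).le
  · refine ⟨K - 1, Nat.sub_lt hK one_pos, ?_, ?_⟩
    · rw [div_le_one hK']; simp
    · rw [Nat.cast_pred hK, sub_add_cancel, div_self hK'.ne']

lemma gridCell_subset_Icc {K k : ℕ} (hk : k < K) : gridCell K k ⊆ Icc 0 1 := by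
  have hK : (0 : ℝ) < K := by exact_mod_cast (k.zero_le.trans_lt hk)
  refine Icc_subset_Icc (by positivity) ?_
  rw [div_le_one hK]
  exact_mod_cast hk

lemma volume_gridCell (K k : ℕ) : volume (gridCell K k) = ENNReal.ofReal (1 / K) := by
  rw [gridCell, Real.volume_Icc, ← sub_div, add_sub_cancel_left]

lemma abs_sub_le_of_mem_gridCell {K k : ℕ} {x y : ℝ} (hx : x ∈ gridCell K k)
    (hy : y ∈ gridCell K k) : |x - y| ≤ 1 / K := by
  rw [abs_sub_le_iff]
  have : ((k : ℝ) + 1) / K - k / K = 1 / K := by rw [← sub_div, add_sub_cancel_left]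
  constructor <;> linarith [hx.1, hx.2, hy.1, hy.2]

-- The recovered whitespace `A_void` is the volume of this set, with `r = r_s(n)`.
def voidRegion {n M : ℕ} (x : Fin n → ℝ) (t : Fin M → ℝ) (r : ℝ) : Set ℝ :=
  ⋃ i ∈ {i : Fin n | ¬ ∃ j, |x i - t j| ≤ r}, Icc (x i - r) (x i + r) ∩ Icc 0 1

lemma voidRegion_subset_Icc {n M : ℕ} (x : Fin n → ℝ) (t : Fin M → ℝ) (r : ℝ) :
    voidRegion x t r ⊆ Icc 0 1 :=
  iUnion₂_subset fun _ _ => inter_subset_right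

lemma Icc_subset_voidRegion_union {n M : ℕ} {x : Fin n → ℝ} {t : Fin M → ℝ} {r : ℝ}
    (hx : ∀ y ∈ Icc (0 : ℝ) 1, ∃ i, |x i - y| ≤ r / 2) :
    Icc 0 1 ⊆ voidRegion x t r ∪ ⋃ j, Icc (t j - 3 * r / 2) (t j + 3 * r / 2) := by
  intro y hy
  by_cases hnear : ∃ j, |y - t j| ≤ 3 * r / 2
  · obtain ⟨j, hj⟩ := hnear
    rw [abs_sub_le_iff] at hj
    exact Or.inr (mem_iUnion.2 ⟨j, by constructor <;> linarith⟩)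
  · push Not at hnear
    obtain ⟨i, hi⟩ := hx y hy
    refine Or.inl (mem_iUnion₂.2 ⟨i, fun ⟨j, hj⟩ => ?_, ?_, hy⟩)
    · have := abs_sub_le y (x i) (t j)
      linarith [hnear j, abs_sub_comm y (x i)]
    · rw [abs_sub_le_iff] at hi
      constructor <;> linarith

lemma one_sub_volume_voidRegion_le {n M : ℕ} {x : Fin n → ℝ} (t : Fin M → ℝ) {r : ℝ}
    (hr : 0 ≤ r) (hx : ∀ y ∈ Icc (0 : ℝ) 1, ∃ i, |x i - y| ≤ r / 2) :
    1 - (volume (voidRegion x t r)).toReal ≤ 3 * M * r := by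
  set V := ⋃ j, Icc (t j - 3 * r / 2) (t j + 3 * r / 2)
  have hV : volume.real V ≤ 3 * M * r :=
    calc _ ≤ ∑ j, volume.real (Icc (t j - 3 * r / 2) (t j + 3 * r / 2)) :=
          measureReal_iUnion_fintype_le _
      _ = ∑ _j : Fin M, 3 * r := Finset.sum_congr rfl fun j _ => by
          rw [Real.volume_real_Icc_of_le (by linarith)]; ring
      _ = 3 * M * r := by simp; ring
  have hbdd : Bornology.IsBounded (voidRegion x t r ∪ V) :=
    ((Metric.isBounded_Icc 0 1).subset (voidRegion_subset_Icc x t r)).union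
      (Bornology.isBounded_iUnion.2 fun _ => Metric.isBounded_Icc _ _)
  calc 1 - volume.real (voidRegion x t r)
      = volume.real (Icc (0 : ℝ) 1) - volume.real (voidRegion x t r) := by simp
    _ ≤ volume.real (voidRegion x t r ∪ V) - volume.real (voidRegion x t r) := by
        gcongr
        · exact hbdd.measure_lt_top.ne
        · exact Icc_subset_voidRegion_union hx
    _ ≤ 3 * M * r := by linarith [measureReal_union_le (μ := volume) (voidRegion x t r) V]

lemma one_div_ceil_two_div_le {r : ℝ} (hr : 0 < r) : 1 / (⌈2 / r⌉₊ : ℝ) ≤ r / 2 := by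
  have hK : 2 / r ≤ ⌈2 / r⌉₊ := Nat.le_ceil _
  rw [div_le_iff₀ hr] at hK
  rw [div_le_div_iff₀ (by positivity) two_pos]
  linarith

lemma ceil_two_div_mul_exp_le {r m : ℝ} (hr : 0 < r) (hr1 : r ≤ 1) (hmr : 3 ≤ m * r) :
    (⌈2 / r⌉₊ : ℝ) * Real.exp (-m / ⌈2 / r⌉₊) ≤ m * Real.exp (-(m * r) / 3) := by
  have hK : (0 : ℝ) < ⌈2 / r⌉₊ := by positivity
  have hK3 : (⌈2 / r⌉₊ : ℝ) * r ≤ 3 :=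
    calc (⌈2 / r⌉₊ : ℝ) * r ≤ (2 / r + 1) * r := by
          gcongr; exact (Nat.ceil_lt_add_one (by positivity)).le
      _ = 2 + r := by field_simp
      _ ≤ 3 := by linarith
  have hm : 0 ≤ m := by nlinarith
  have hKm : (⌈2 / r⌉₊ : ℝ) ≤ m := le_of_mul_le_mul_right (by linarith) hr
  calc (⌈2 / r⌉₊ : ℝ) * Real.exp (-m / ⌈2 / r⌉₊) ≤ m * Real.exp (-m / ⌈2 / r⌉₊) := by
        gcongr
    _ ≤ m * Real.exp (-(m * r) / 3) := by
      gcongr m * ?_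
      refine Real.exp_le_exp.2 ?_
      rw [neg_div, neg_div, neg_le_neg_iff, div_le_div_iff₀ (by norm_num) hK]
      nlinarith

lemma one_sub_ofReal_pow_le {a : ℝ} (ha : 0 ≤ a) (n : ℕ) :
    (1 - ENNReal.ofReal a) ^ n ≤ ENNReal.ofReal (Real.exp (-(n * a))) := by
  have h : 1 - ENNReal.ofReal a ≤ ENNReal.ofReal (Real.exp (-a)) := by
    rw [← ENNReal.ofReal_one, ← ENNReal.ofReal_sub 1 ha]
    exact ENNReal.ofReal_le_ofReal (Real.one_sub_le_exp_neg a)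
  calc (1 - ENNReal.ofReal a) ^ n ≤ ENNReal.ofReal (Real.exp (-a)) ^ n := by gcongr
    _ = ENNReal.ofReal (Real.exp (-(n * a))) := by
      rw [← ENNReal.ofReal_pow (Real.exp_pos _).le, ← Real.exp_nat_mul, mul_neg]

lemma compl_setOf_le_subset_exists_empty_gridCell {Ω : Type*} {n M : ℕ} {X : Fin n → Ω → ℝ}
    (t : Fin M → ℝ) {r : ℝ} {K : ℕ} (hK : 0 < K) (hKr : 1 / (K : ℝ) ≤ r / 2) :
    {ω | 1 - (volume (voidRegion (fun i => X i ω) t r)).toReal ≤ 3 * M * r}ᶜ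
      ⊆ ⋃ k ∈ Finset.range K, ⋂ i, X i ⁻¹' (gridCell K k)ᶜ := by
  intro ω hω
  by_contra hcov
  simp only [mem_iUnion, mem_iInter, mem_preimage, mem_compl_iff, Finset.mem_range,
    not_exists, not_forall, not_not] at hcov
  refine hω (one_sub_volume_voidRegion_le t ?_ fun y hy => ?_)
  · linarith [show (0 : ℝ) < 1 / K by positivity]
  · obtain ⟨k, hk, hyk⟩ := exists_lt_mem_gridCell hK hy
    obtain ⟨i, hik⟩ := hcov k hk
    exact ⟨i, (abs_sub_le_of_mem_gridCell hik hyk).trans hKr⟩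

section Sensors

variable {Ω : Type*} [MeasurableSpace Ω] {P : Measure Ω} {n : ℕ} {X : Fin n → Ω → ℝ}

lemma measure_iInter_preimage_compl_eq (hmeas : ∀ i, Measurable (X i))
    (hunif : ∀ i, Measure.map (X i) P = volume.restrict (Icc (0 : ℝ) 1))
    (hindep : iIndepFun X P) {s : Set ℝ} (hs : MeasurableSet s) (hs1 : s ⊆ Icc 0 1) :
    P (⋂ i, X i ⁻¹' sᶜ) = (1 - volume s) ^ n := by
  have hcompl : ∀ i, P (X i ⁻¹' sᶜ) = 1 - volume s := fun i => by
    rw [← Measure.map_apply (hmeas i) hs.compl, hunif i, Measure.restrict_apply hs.compl,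
      ← sdiff_eq_compl_inter, measure_sdiff hs1 hs.nullMeasurableSet, Real.volume_Icc]
    · simp
    · exact ((measure_mono hs1).trans_lt measure_Icc_lt_top).ne
  rw [hindep.meas_iInter fun i => ⟨sᶜ, hs.compl, rfl⟩]
  simp only [hcompl, Finset.prod_const, Finset.card_univ, Fintype.card_fin]

lemma measure_exists_empty_gridCell_le (hmeas : ∀ i, Measurable (X i))
    (hunif : ∀ i, Measure.map (X i) P = volume.restrict (Icc (0 : ℝ) 1))
    (hindep : iIndepFun X P) (K : ℕ) :
    P (⋃ k ∈ Finset.range K, ⋂ i, X i ⁻¹' (gridCell K k)ᶜ)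
      ≤ K * ENNReal.ofReal (Real.exp (-n / K)) :=
  calc _ ≤ ∑ k ∈ Finset.range K, P (⋂ i, X i ⁻¹' (gridCell K k)ᶜ) :=
        measure_biUnion_finset_le _ _
    _ = ∑ _k ∈ Finset.range K, (1 - ENNReal.ofReal (1 / K)) ^ n :=
        Finset.sum_congr rfl fun k hk => by
          rw [measure_iInter_preimage_compl_eq (s := gridCell K k) hmeas hunif hindep
            measurableSet_Icc (gridCell_subset_Icc (Finset.mem_range.1 hk)), volume_gridCell]
    _ ≤ ∑ _k ∈ Finset.range K, ENNReal.ofReal (Real.exp (-n / K)) := by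
        gcongr
        exact (one_sub_ofReal_pow_le (by positivity) n).trans_eq (by rw [mul_one_div, neg_div])
    _ = K * ENNReal.ofReal (Real.exp (-n / K)) := by simp

end Sensors

lemma tendsto_natCast_mul_exp_neg_mul_log {c : ℝ} (hc : 3 < c) :
    Tendsto (fun n : ℕ => (n : ℝ) * Real.exp (-(c * Real.log n) / 3)) atTop (nhds 0) := by
  have h : Tendsto (fun n : ℕ => (1 - c / 3) * Real.log n) atTop atBot :=
    (Real.tendsto_log_atTop.comp tendsto_natCast_atTop_atTop).const_mul_atTop_of_neg
      (by linarith)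
  refine (Real.tendsto_exp_atBot.comp h).congr' ?_
  filter_upwards [eventually_gt_atTop 0] with n hn
  rw [Function.comp_apply, sub_mul, one_mul, Real.exp_sub, Real.exp_log (by exact_mod_cast hn),
    neg_div, Real.exp_neg, div_eq_mul_inv, mul_div_right_comm]

lemma tendsto_measure_of_tendsto_measure_compl {Ω ι : Type*} [MeasurableSpace Ω] {P : Measure Ω}
    [IsProbabilityMeasure P] {l : Filter ι} {S : ι → Set Ω}
    (h : Tendsto (fun i => P (S i)ᶜ) l (nhds 0)) : Tendsto (fun i => P (S i)) l (nhds 1) := by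
  have hlow : Tendsto (fun i => 1 - P (S i)ᶜ) l (nhds 1) := by
    simpa using ENNReal.Tendsto.sub tendsto_const_nhds h (Or.inl ENNReal.one_ne_top)
  refine tendsto_of_tendsto_of_tendsto_of_le_of_le hlow tendsto_const_nhds (fun i => ?_)
    fun _ => prob_le_one
  rw [tsub_le_iff_right, ← measure_univ (μ := P)]
  exact measure_univ_le_add_compl _

theorem whitespace_recovery_reliable_general
    {Ω : Type*} [MeasurableSpace Ω] (P : Measure Ω) [IsProbabilityMeasure P]
    (X : (n : ℕ) → Fin n → Ω → ℝ)
    (hmeas : ∀ n i, Measurable (X n i))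
    (hunif : ∀ n i, Measure.map (X n i) P = volume.restrict (Set.Icc (0:ℝ) 1))
    (hindep : ∀ n, iIndepFun (X n) P)
    (M : ℕ) (t : Fin M → ℝ) :
    ∃ c₀ : ℝ, 0 < c₀ ∧ ∀ c : ℝ, c₀ ≤ c →
      Tendsto
        (fun n : ℕ =>
          P {ω | 1 -
              (volume (⋃ i ∈ {i : Fin n | ¬ ∃ j, |X n i ω - t j| ≤ c * Real.log n / n},
                  Set.Icc (X n i ω - c * Real.log n / n) (X n i ω + c * Real.log n / n)
                    ∩ Set.Icc (0:ℝ) 1)).toReal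
            ≤ 3 * M * (c * Real.log n / n)})
        atTop (nhds 1) := by
  refine ⟨4, by norm_num, fun c hc => tendsto_measure_of_tendsto_measure_compl ?_⟩
  have hlog : Tendsto (fun n : ℕ => Real.log n) atTop atTop :=
    Real.tendsto_log_atTop.comp tendsto_natCast_atTop_atTop
  have hr0 : Tendsto (fun n : ℕ => c * Real.log n / n) atTop (nhds 0) := by
    simpa [mul_div_assoc] using ((Real.tendsto_pow_log_div_mul_add_atTop 1 0 1 one_ne_zero).comp
      tendsto_natCast_atTop_atTop).const_mul c
  refine tendsto_of_tendsto_of_tendsto_of_le_of_le' tendsto_const_nhds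
    (by simpa only [ENNReal.ofReal_zero] using
      ENNReal.tendsto_ofReal (tendsto_natCast_mul_exp_neg_mul_log (c := c) (by linarith)))
    (Eventually.of_forall fun _ => zero_le) ?_
  filter_upwards [hr0.eventually (eventually_le_nhds one_pos), hlog.eventually_ge_atTop (3 / c),
    eventually_gt_atTop 1] with n hr1 hlogn hn
  set r := c * Real.log n / n
  have hr : 0 < r := by
    have := Real.log_pos (show (1 : ℝ) < n by exact_mod_cast hn)
    positivity
  have hnr : n * r = c * Real.log n := mul_div_cancel₀ _ (by positivity)
  have hnr3 : 3 ≤ n * r := by rw [hnr, ← div_le_iff₀' (by linarith)]; exact hlogn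
  calc _ ≤ P (⋃ k ∈ Finset.range ⌈2 / r⌉₊, ⋂ i, X n i ⁻¹' (gridCell ⌈2 / r⌉₊ k)ᶜ) :=
        measure_mono <| compl_setOf_le_subset_exists_empty_gridCell t
          (Nat.ceil_pos.2 (by positivity)) (one_div_ceil_two_div_le hr)
    _ ≤ ⌈2 / r⌉₊ * ENNReal.ofReal (Real.exp (-n / ⌈2 / r⌉₊)) :=
        measure_exists_empty_gridCell_le (hmeas n) (hunif n) (hindep n) _
    _ ≤ ENNReal.ofReal (n * Real.exp (-(c * Real.log n) / 3)) := by
        rw [← ENNReal.ofReal_natCast, ← ENNReal.ofReal_mul (by positivity), ← hnr]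
        exact ENNReal.ofReal_le_ofReal (ceil_two_div_mul_exp_le hr hr1 hnr3)

/-- Whitespace recovery with reliable sensors: with `n` i.i.d. uniform sensors
on `[0,1]`, radio range `r_s(n) = (c log n)/n` for a sufficiently large
constant `c`, and `M` arbitrarily placed transmitters, the probability that the
recovered whitespace `A_void` satisfies `1 - A_void ≤ 3M·(c log n)/n` tends to
`1` as `n → ∞`. -/
theorem whitespace_recovery_reliable
    {Ω : Type*} [MeasurableSpace Ω] (P : Measure Ω) [IsProbabilityMeasure P]
    (X : (n : ℕ) → Fin n → Ω → ℝ)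
    (hmeas : ∀ n i, Measurable (X n i))
    (hunif : ∀ n i, Measure.map (X n i) P = volume.restrict (Set.Icc (0:ℝ) 1))
    (hindep : ∀ n, iIndepFun (X n) P)
    (M : ℕ) (t : Fin M → ℝ) (ht : ∀ j, t j ∈ Set.Icc (0:ℝ) 1) :
    ∃ c₀ : ℝ, 0 < c₀ ∧ ∀ c : ℝ, c₀ ≤ c →
      Tendsto
        (fun n : ℕ =>
          P {ω | 1 -
              (volume (⋃ i ∈ {i : Fin n | ¬ ∃ j, |X n i ω - t j| ≤ c * Real.log n / n},
                  Set.Icc (X n i ω - c * Real.log n / n) (X n i ω + c * Real.log n / n)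
                    ∩ Set.Icc (0:ℝ) 1)).toReal
            ≤ 3 * M * (c * Real.log n / n)})
        atTop (nhds 1) :=
  whitespace_recovery_reliable_general P X hmeas hunif hindep M t
end

section
/- Let n points be placed independently and uniformly at random in [0,1] and let r(n) > 0 satisfy r(n)·n/log n → 0 as n → ∞. Say x ∈ [0,1] is covered if some point lies in [x - r(n), x + r(n)]. Then limsup_{n→∞} P(every x ∈ [0,1] is covered) ≤ c₂ for some constant c₂ < 1. -/
/-!
Let `ρ = r n` and `p = (1 - 2ρ)^n`, the probability that a fixed interval of length `2ρ` in
`[0,1]` receives none of the `n` points; the centre of such an empty interval is uncovered.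
Since `ρ n = o(log n)`, eventually `p ≥ n^{-1/2}`, so `m = ⌈1/(4p)⌉` disjoint probe intervals of
length `2ρ` fit in `[0,1]`. By independence, two disjoint probes are empty with probability at
most `p²`, so the second Bonferroni inequality shows that some probe is empty with probability
at least `mp - (mp)² ≥ 3/16` (for `p < 1/4`, as then `mp ∈ [1/4, 1/2]`; otherwise one probe
suffices). Hence `[0,1]` is covered with probability at most `13/16` for all large `n`.
-/

open MeasureTheory ProbabilityTheory Filter Finset Function

theorem Finset.card_le_one_add_card_offDiag {α : Type*} [DecidableEq α] (s : Finset α) :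
    #s ≤ 1 + #s.offDiag := by
  rw [offDiag_card]
  rcases #s with _ | k
  · simp
  · rw [Nat.add_one_mul, Nat.add_sub_cancel]
    nlinarith

theorem sum_indicator_one_le_indicator_iUnion_add_sum_offDiag {α ι : Type*} [Fintype ι]
    [DecidableEq ι] (A : ι → Set α) (a : α) :
    ∑ j, (A j).indicator (1 : α → ℝ) a ≤
      (⋃ j, A j).indicator 1 a + ∑ q ∈ univ.offDiag, (A q.1 ∩ A q.2).indicator 1 a := by
  classical
  set s := univ.filter (a ∈ A ·)
  have hsum : ∑ j, (A j).indicator (1 : α → ℝ) a = #s := by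
    simp [Set.indicator_apply, sum_boole, s]
  have hpairs : ∑ q ∈ univ.offDiag, (A q.1 ∩ A q.2).indicator (1 : α → ℝ) a
      = #s.offDiag := by
    simp only [Set.indicator_apply, Pi.one_apply]
    rw [sum_boole]
    congr 2
    ext q
    simp only [Set.mem_inter_iff, mem_filter, mem_offDiag, mem_univ, ne_eq, true_and, s]
    tauto
  rw [hsum, hpairs]
  by_cases ha : a ∈ ⋃ j, A j
  · rw [Set.indicator_of_mem ha, Pi.one_apply]
    exact_mod_cast s.card_le_one_add_card_offDiag
  · have : s = ∅ := by
      simp only [Set.mem_iUnion, not_exists] at ha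
      simp [s, ha]
    simp [this, Set.indicator_nonneg]

theorem sum_measureReal_le_measureReal_iUnion_add_sum_offDiag {α ι : Type*} [MeasurableSpace α]
    [Fintype ι] [DecidableEq ι] (μ : Measure α) [IsFiniteMeasure μ] {A : ι → Set α}
    (hA : ∀ j, MeasurableSet (A j)) :
    ∑ j, μ.real (A j) ≤
      μ.real (⋃ j, A j) + ∑ q ∈ univ.offDiag, μ.real (A q.1 ∩ A q.2) := by
  have hintegrable : ∀ {s : Set α}, MeasurableSet s → Integrable (s.indicator (1 : α → ℝ)) μ :=
    fun hs => (integrable_const (1 : ℝ)).indicator hs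
  have hA₂ : ∀ q : ι × ι, MeasurableSet (A q.1 ∩ A q.2) := fun q => (hA q.1).inter (hA q.2)
  have hU := hintegrable (MeasurableSet.iUnion hA)
  have hsum := integrable_finsetSum univ fun j _ => hintegrable (hA j)
  have hsum₂ := integrable_finsetSum univ.offDiag fun q _ => hintegrable (hA₂ q)
  simp only [← integral_indicator_one (hA _), ← integral_indicator_one (hA₂ _),
    ← integral_indicator_one (MeasurableSet.iUnion hA)]
  rw [← integral_finsetSum _ fun j _ => hintegrable (hA j),
    ← integral_finsetSum _ fun q _ => hintegrable (hA₂ q), ← integral_add hU hsum₂]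
  exact integral_mono hsum (hU.add hsum₂)
    fun a => by simpa using sum_indicator_one_le_indicator_iUnion_add_sum_offDiag A a

section Independence

variable {Ω β ι : Type*} [MeasurableSpace Ω] [MeasurableSpace β] [Fintype ι]
  {P : Measure Ω} {Y : ι → Ω → β}

theorem ProbabilityTheory.iIndepFun.measureReal_iInter_preimage (hY : iIndepFun Y P)
    {S : ι → Set β} (hS : ∀ i, MeasurableSet (S i)) :
    P.real (⋂ i, Y i ⁻¹' S i) = ∏ i, P.real (Y i ⁻¹' S i) := by
  simp only [measureReal_def, hY.meas_iInter fun i => ⟨S i, hS i, rfl⟩, ENNReal.toReal_prod]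

def avoidEvent (Y : ι → Ω → β) (S : Set β) : Set Ω := ⋂ i, Y i ⁻¹' Sᶜ

theorem measurableSet_avoidEvent (hmeas : ∀ i, Measurable (Y i)) {S : Set β}
    (hS : MeasurableSet S) : MeasurableSet (avoidEvent Y S) :=
  MeasurableSet.iInter fun i => hmeas i hS.compl

variable [IsProbabilityMeasure P]

theorem measureReal_avoidEvent (hmeas : ∀ i, Measurable (Y i)) {ν : Measure β}
    (hlaw : ∀ i, P.map (Y i) = ν) (hY : iIndepFun Y P) {S : Set β} (hS : MeasurableSet S) :
    P.real (avoidEvent Y S) = (1 - ν.real S) ^ Fintype.card ι := by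
  rw [avoidEvent, hY.measureReal_iInter_preimage fun _ => hS.compl, ← card_univ,
    ← prod_const]
  refine prod_congr rfl fun i _ => ?_
  rw [Set.preimage_compl, probReal_compl_eq_one_sub (hmeas i hS), ← hlaw i,
    map_measureReal_apply (hmeas i) hS]

theorem measureReal_avoidEvent_inter_le (hmeas : ∀ i, Measurable (Y i)) (hY : iIndepFun Y P)
    {S T : Set β} (hS : MeasurableSet S) (hT : MeasurableSet T) (hST : Disjoint S T) :
    P.real (avoidEvent Y S ∩ avoidEvent Y T) ≤
      P.real (avoidEvent Y S) * P.real (avoidEvent Y T) := by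
  have hunion : avoidEvent Y S ∩ avoidEvent Y T = avoidEvent Y (S ∪ T) := by
    simp only [avoidEvent, ← Set.iInter_inter_distrib, Set.compl_union, Set.preimage_inter]
  rw [hunion, avoidEvent, avoidEvent, avoidEvent,
    hY.measureReal_iInter_preimage fun _ => (hS.union hT).compl,
    hY.measureReal_iInter_preimage fun _ => hS.compl,
    hY.measureReal_iInter_preimage fun _ => hT.compl, ← prod_mul_distrib]
  refine prod_le_prod (fun _ _ => measureReal_nonneg) fun i _ => ?_
  simp only [Set.preimage_compl, Set.preimage_union]
  rw [probReal_compl_eq_one_sub ((hmeas i hS).union (hmeas i hT)),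
    measureReal_union (hST.preimage _) (hmeas i hT), probReal_compl_eq_one_sub (hmeas i hS),
    probReal_compl_eq_one_sub (hmeas i hT)]
  nlinarith [measureReal_nonneg (μ := P) (s := Y i ⁻¹' S),
    measureReal_nonneg (μ := P) (s := Y i ⁻¹' T)]

end Independence

theorem inv_sqrt_le_one_sub_two_mul_pow {ρ : ℝ} {n : ℕ} (hρ : 0 ≤ ρ) (hn : 0 < n)
    (h : 8 * ρ * n ≤ Real.log n) : (√n)⁻¹ ≤ (1 - 2 * ρ) ^ n := by
  have hn' : (0 : ℝ) < n := by exact_mod_cast hn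
  have hρ8 : ρ < 1 / 8 := by
    nlinarith [Real.log_le_sub_one_of_pos hn']
  have hpos : 0 < 1 - 2 * ρ := by linarith
  have hlog : -(4 * ρ) ≤ Real.log (1 - 2 * ρ) := by
    have hinv : (1 - 2 * ρ)⁻¹ ≤ 1 + 4 * ρ := by
      rw [inv_le_iff_one_le_mul₀ hpos]; nlinarith
    linarith [Real.one_sub_inv_le_log_of_pos hpos]
  rw [Real.sqrt_eq_rpow, Real.rpow_def_of_pos hn', ← Real.exp_neg, ← Real.exp_log hpos,
    ← Real.exp_nat_mul, Real.exp_le_exp]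
  nlinarith

theorem three_mul_mul_ceil_le_one {ρ p : ℝ} {n : ℕ} (hρ : 0 ≤ ρ) (hn : 0 < n)
    (h : 8 * ρ * n ≤ Real.log n) (hp : (√n)⁻¹ ≤ p) : 3 * ρ * ⌈(4 * p)⁻¹⌉₊ ≤ 1 := by
  set s := √(n : ℝ)
  have hs1 : 1 ≤ s := Real.one_le_sqrt.mpr (by exact_mod_cast hn)
  have hs2 : s ^ 2 = n := Real.sq_sqrt (Nat.cast_nonneg n)
  have hlog : Real.log n ≤ 2 * (s - 1) := by
    rw [← hs2, Real.log_pow]; push_cast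
    linarith [Real.log_le_sub_one_of_pos (by linarith : 0 < s)]
  have hp0 : 0 < p := lt_of_lt_of_le (by positivity) hp
  have hm : (⌈(4 * p)⁻¹⌉₊ : ℝ) ≤ s / 4 + 1 := by
    refine (Nat.ceil_lt_add_one (by positivity)).le.trans ?_
    have : p⁻¹ ≤ s := by simpa using inv_anti₀ (by positivity) hp
    rw [mul_inv]; linarith
  have hρs : ρ * s ^ 2 * 4 ≤ s - 1 := by rw [hs2]; linarith
  calc 3 * ρ * ⌈(4 * p)⁻¹⌉₊ ≤ 3 * ρ * (s / 4 + 1) := by gcongr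
    _ ≤ 1 := by nlinarith

-- Written as the `ρ`-neighbourhood of `(3j+1)ρ`, so that a point covering that centre lies in it.
def probeInterval (ρ : ℝ) (j : ℕ) : Set ℝ :=
  Set.Icc ((3 * j + 1) * ρ - ρ) ((3 * j + 1) * ρ + ρ)

section ProbeInterval

variable {ρ : ℝ}

theorem probeInterval_subset_Icc {j : ℕ} (hρ : 0 ≤ ρ) (hj : 3 * ρ * (j + 1) ≤ 1) :
    probeInterval ρ j ⊆ Set.Icc 0 1 :=
  Set.Icc_subset_Icc (by nlinarith) (by linarith)

theorem measurableSet_probeInterval (ρ : ℝ) (j : ℕ) : MeasurableSet (probeInterval ρ j) :=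
  measurableSet_Icc

theorem volume_real_probeInterval (hρ : 0 ≤ ρ) (j : ℕ) :
    volume.real (probeInterval ρ j) = 2 * ρ := by
  rw [probeInterval, Real.volume_real_Icc_of_le (by linarith)]
  ring

theorem pairwise_disjoint_probeInterval (hρ : 0 < ρ) :
    Pairwise (Disjoint on probeInterval ρ) := by
  refine (pairwise_disjoint_on _).mpr fun j k hjk => Set.disjoint_left.mpr ?_
  rintro x ⟨-, hxj⟩ ⟨hxk, -⟩
  have : (j : ℝ) + 1 ≤ k := by exact_mod_cast hjk
  nlinarith

theorem setOf_covers_subset_compl_iUnion_avoidEvent {Ω ι : Type*} (Y : ι → Ω → ℝ) (hρ : 0 ≤ ρ)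
    {m : ℕ} (hm : 3 * ρ * m ≤ 1) :
    {ω | ∀ x ∈ Set.Icc (0 : ℝ) 1, ∃ i, Y i ω ∈ Set.Icc (x - ρ) (x + ρ)} ⊆
      (⋃ j : Fin m, avoidEvent Y (probeInterval ρ j))ᶜ := by
  intro ω hω
  simp only [Set.mem_compl_iff, Set.mem_iUnion, not_exists]
  intro j hj
  have : (j : ℝ) + 1 ≤ m := by exact_mod_cast j.isLt
  obtain ⟨i, hi⟩ := hω ((3 * j + 1) * ρ) ⟨by positivity, by nlinarith⟩
  exact Set.mem_iInter.mp hj i hi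

end ProbeInterval

section Coverage

variable {Ω : Type*} [MeasurableSpace Ω] {P : Measure Ω} [IsProbabilityMeasure P] {n : ℕ}
  {Y : Fin n → Ω → ℝ} {ρ : ℝ}

theorem measureReal_avoidEvent_probeInterval (hmeas : ∀ i, Measurable (Y i))
    (hunif : ∀ i, P.map (Y i) = volume.restrict (Set.Icc (0 : ℝ) 1)) (hindep : iIndepFun Y P)
    (hρ : 0 ≤ ρ) {j : ℕ} (hj : 3 * ρ * (j + 1) ≤ 1) :
    P.real (avoidEvent Y (probeInterval ρ j)) = (1 - 2 * ρ) ^ n := by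
  rw [measureReal_avoidEvent hmeas hunif hindep (measurableSet_probeInterval ρ j),
    measureReal_restrict_apply (measurableSet_probeInterval ρ j),
    Set.inter_eq_left.mpr (probeInterval_subset_Icc hρ hj), volume_real_probeInterval hρ,
    Fintype.card_fin]

theorem sub_sq_le_measureReal_iUnion_avoidEvent (hmeas : ∀ i, Measurable (Y i))
    (hunif : ∀ i, P.map (Y i) = volume.restrict (Set.Icc (0 : ℝ) 1)) (hindep : iIndepFun Y P)
    (hρ : 0 < ρ) {m : ℕ} (hm : 3 * ρ * m ≤ 1) :
    m * (1 - 2 * ρ) ^ n - (m * (1 - 2 * ρ) ^ n) ^ 2 ≤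
      P.real (⋃ j : Fin m, avoidEvent Y (probeInterval ρ j)) := by
  set p := (1 - 2 * ρ) ^ n
  have hA : ∀ j : Fin m, P.real (avoidEvent Y (probeInterval ρ j)) = p := fun j => by
    have : (j : ℝ) + 1 ≤ m := by exact_mod_cast j.isLt
    exact measureReal_avoidEvent_probeInterval hmeas hunif hindep hρ.le (by nlinarith)
  have hAA : ∀ q ∈ (univ : Finset (Fin m)).offDiag,
      P.real (avoidEvent Y (probeInterval ρ q.1) ∩ avoidEvent Y (probeInterval ρ q.2)) ≤ p * p :=
    fun q hq => (measureReal_avoidEvent_inter_le hmeas hindep (measurableSet_probeInterval ρ _)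
      (measurableSet_probeInterval ρ _)
      (pairwise_disjoint_probeInterval hρ (Fin.val_injective.ne (mem_offDiag.mp hq).2.2))).trans_eq
      (by rw [hA, hA])
  have hcard : (#(univ : Finset (Fin m)).offDiag : ℝ) ≤ m * m := by
    rw [offDiag_card, card_univ, Fintype.card_fin]
    exact_mod_cast Nat.sub_le _ _
  have hbonf := sum_measureReal_le_measureReal_iUnion_add_sum_offDiag P
    fun j : Fin m => measurableSet_avoidEvent hmeas (measurableSet_probeInterval ρ j)
  rw [sum_congr rfl fun j _ => hA j, sum_const, card_univ, Fintype.card_fin,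
    nsmul_eq_mul] at hbonf
  have hpairs := sum_le_card_nsmul _ _ _ hAA
  rw [nsmul_eq_mul] at hpairs
  have := mul_le_mul_of_nonneg_right hcard (mul_self_nonneg p)
  linarith [show (m * p) ^ 2 = m * m * (p * p) by ring]

theorem measureReal_setOf_covers_le (hmeas : ∀ i, Measurable (Y i))
    (hunif : ∀ i, P.map (Y i) = volume.restrict (Set.Icc (0 : ℝ) 1)) (hindep : iIndepFun Y P)
    (hn : 0 < n) (hρ : 0 < ρ) (h : 8 * ρ * n ≤ Real.log n) :
    P.real {ω | ∀ x ∈ Set.Icc (0 : ℝ) 1, ∃ i, Y i ω ∈ Set.Icc (x - ρ) (x + ρ)} ≤ 13 / 16 := by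
  set p := (1 - 2 * ρ) ^ n
  have hp : (√n)⁻¹ ≤ p := inv_sqrt_le_one_sub_two_mul_pow hρ.le hn h
  have hp0 : 0 < p := lt_of_lt_of_le (by positivity) hp
  set m := ⌈(4 * p)⁻¹⌉₊
  have hm : 3 * ρ * m ≤ 1 := three_mul_mul_ceil_le_one hρ.le hn h hp
  have hunion : 3 / 16 ≤ P.real (⋃ j : Fin m, avoidEvent Y (probeInterval ρ j)) := by
    rcases le_or_gt (1 / 4) p with hp4 | hp4
    · have hm0 : 0 < m := Nat.ceil_pos.mpr (by positivity)
      have hm1 : (1 : ℝ) ≤ m := by exact_mod_cast hm0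
      calc 3 / 16 ≤ p := by linarith
        _ = P.real (avoidEvent Y (probeInterval ρ 0)) :=
          (measureReal_avoidEvent_probeInterval hmeas hunif hindep hρ.le
            (by push_cast; nlinarith)).symm
        _ ≤ _ := measureReal_mono
          (Set.subset_iUnion (fun j : Fin m => avoidEvent Y (probeInterval ρ j)) ⟨0, hm0⟩)
    · have hlow : (4 * p)⁻¹ ≤ m := Nat.le_ceil _
      have hup : (m : ℝ) < (4 * p)⁻¹ + 1 := Nat.ceil_lt_add_one (by positivity)
      have hmp : (4 * p)⁻¹ * p = 1 / 4 := by field_simp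
      have hlow' : 1 / 4 ≤ m * p := hmp ▸ mul_le_mul_of_nonneg_right hlow hp0.le
      have hup' : m * p ≤ 1 / 2 := by nlinarith
      nlinarith [sub_sq_le_measureReal_iUnion_avoidEvent hmeas hunif hindep hρ hm]
  calc _ ≤ P.real (⋃ j : Fin m, avoidEvent Y (probeInterval ρ j))ᶜ :=
        measureReal_mono (setOf_covers_subset_compl_iUnion_avoidEvent Y hρ.le hm)
    _ = 1 - P.real (⋃ j : Fin m, avoidEvent Y (probeInterval ρ j)) :=
        probReal_compl_eq_one_sub (MeasurableSet.iUnion fun j =>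
          measurableSet_avoidEvent hmeas (measurableSet_probeInterval ρ j))
    _ ≤ 13 / 16 := by linarith

end Coverage

/-- One-dimensional 1-coverage lower bound: if `n` points are i.i.d. uniform on
`[0,1]` and the radius `r(n) > 0` satisfies `r(n)·n/log n → 0`, then the
probability that every point of `[0,1]` is within `r(n)` of some point has
`limsup` bounded by a constant `c₂ < 1`. -/
theorem coverage_lower_bound
    {Ω : Type*} [MeasurableSpace Ω] (P : Measure Ω) [IsProbabilityMeasure P]
    (X : (n : ℕ) → Fin n → Ω → ℝ)
    (hmeas : ∀ n i, Measurable (X n i))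
    (hunif : ∀ n i, Measure.map (X n i) P = volume.restrict (Set.Icc (0:ℝ) 1))
    (hindep : ∀ n, iIndepFun (X n) P)
    (r : ℕ → ℝ) (hrpos : ∀ n, 0 < r n)
    (hr : Tendsto (fun n : ℕ => r n * n / Real.log n) atTop (nhds 0)) :
    ∃ c₂ : ℝ, c₂ < 1 ∧
      Filter.limsup
        (fun n : ℕ =>
          P {ω | ∀ x ∈ Set.Icc (0:ℝ) 1, ∃ i : Fin n,
              X n i ω ∈ Set.Icc (x - r n) (x + r n)})
        atTop ≤ ENNReal.ofReal c₂ := by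
  refine ⟨13 / 16, by norm_num, limsup_le_of_le (by isBoundedDefault) ?_⟩
  filter_upwards [hr.eventually_lt_const (by norm_num : (0 : ℝ) < 1 / 8),
    eventually_ge_atTop 2] with n hsmall hn
  have hlog : 0 < Real.log n := Real.log_pos (by exact_mod_cast hn)
  rw [← ofReal_measureReal]
  exact ENNReal.ofReal_le_ofReal <| measureReal_setOf_covers_le (hmeas n) (hunif n) (hindep n)
    (by omega) (hrpos n) (by rw [div_lt_iff₀ hlog] at hsmall; linarith)
end

section
/- With unreliable sensors, each flipping its reading independently with probability p < 1/2, if r_s(n) = Θ((log n)/n), then there exists ε(n) = Θ((log n)/n) such that, using the majority rule within each interval of length (c log n)/n to declare presence or absence of a transmitter, P(1 - A_void ≤ ε(n)) → 1 as n → ∞. -/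
/-!
A cell of the partition at distance more than `ℓ = c log n / n` from every transmitter is truly
empty, so its sensors read exactly their flip bits and the majority rule errs there only if more
of its sensors flipped than not. Giving each sensor the vote `+1` (in the cell, flipped), `-1` (in
the cell, not flipped) or `0`, a Chernoff bound on the sum of the `n` independent votes bounds
this probability by `(1 - ℓ (1 - 2√(p(1-p))))ⁿ ≤ n⁻²` once `c (1 - 2√(p(1-p))) ≥ 2`; this single
bound replaces both the count of sensors per cell and the repetition-code estimate. A union bound
over at most `n` cells leaves probability `≤ 1/n`. Off that event every vacant cell inside `[0,1]`
is declared void, and the rest of `[0,1]` lies within `2ℓ` of a transmitter or within `ℓ` of `1`,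
of total length at most `(4M + 1) ℓ`.
-/

open MeasureTheory ProbabilityTheory Filter Set Real
open scoped Classical Finset ENNReal

section MajorityVote

variable {Ω α ι : Type*} {I : Set α}

noncomputable def vote (I : Set α) : α × Bool → ℝ :=
  (I ×ˢ {true}).indicator 1 - (I ×ˢ {false}).indicator 1

lemma measurable_vote [MeasurableSpace α] (hI : MeasurableSet I) : Measurable (vote I) :=
  (measurable_one.indicator (hI.prod (measurableSet_singleton _))).sub
    (measurable_one.indicator (hI.prod (measurableSet_singleton _)))

lemma sum_vote [Fintype ι] [DecidablePred (· ∈ I)] (x : ι → α) (b : ι → Bool) :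
    ∑ i, vote I (x i, b i) =
      (#{i | x i ∈ I ∧ b i = true} : ℝ) - #{i | x i ∈ I ∧ ¬ b i = true} := by
  simp [vote, Set.indicator_apply, Finset.sum_sub_distrib, Finset.sum_boole]

lemma vote_le_one (z : α × Bool) : vote I z ≤ 1 := by
  obtain ⟨x, b⟩ := z
  by_cases hx : x ∈ I <;> cases b <;> simp [vote, hx]

lemma exp_mul_vote (t : ℝ) (z : α × Bool) :
    exp (t * vote I z) = 1 + (I ×ˢ {true}).indicator (fun _ => exp t - 1) z
      + (I ×ˢ {false}).indicator (fun _ => exp (-t) - 1) z := by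
  obtain ⟨x, b⟩ := z
  by_cases hx : x ∈ I <;> cases b <;> simp [vote, hx]

lemma mgf_vote_comp [MeasurableSpace Ω] [MeasurableSpace α] {P : Measure Ω}
    [IsProbabilityMeasure P] {Z : Ω → α × Bool} (hZ : Measurable Z) (hI : MeasurableSet I) (t : ℝ) :
    mgf (fun ω => vote I (Z ω)) P t = 1 + P.real (Z ⁻¹' (I ×ˢ {true})) * (exp t - 1)
      + P.real (Z ⁻¹' (I ×ˢ {false})) * (exp (-t) - 1) := by
  have hT : MeasurableSet (I ×ˢ {true}) := hI.prod (measurableSet_singleton _)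
  have hF : MeasurableSet (I ×ˢ {false}) := hI.prod (measurableSet_singleton _)
  rw [mgf, ← integral_map (f := fun z => exp (t * vote I z)) hZ.aemeasurable
    ((measurable_vote hI).const_mul t).exp.aestronglyMeasurable]
  simp_rw [exp_mul_vote]
  rw [integral_add ((integrable_const _).add ((integrable_const _).indicator hT))
      ((integrable_const _).indicator hF),
    integral_add (integrable_const _) ((integrable_const _).indicator hT),
    integral_indicator_const _ hT, integral_indicator_const _ hF,
    map_measureReal_apply hZ hT, map_measureReal_apply hZ hF]
  have := Measure.isProbabilityMeasure_map (μ := P) hZ.aemeasurable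
  simp

variable [MeasurableSpace Ω] [MeasurableSpace α] {P : Measure Ω} [IsProbabilityMeasure P]
  {p q : ℝ}

lemma mgf_vote_of_indepFun {X : Ω → α} {F : Ω → Bool} (hX : Measurable X) (hF : Measurable F)
    (hXF : IndepFun X F P) (hI : MeasurableSet I) (hq : P.real (X ⁻¹' I) = q)
    (hp : P.real {ω | F ω = true} = p) (t : ℝ) :
    mgf (fun ω => vote I (X ω, F ω)) P t = 1 - q + q * (p * exp t + (1 - p) * exp (-t)) := by
  have hF' : P.real (F ⁻¹' {false}) = 1 - p := by
    rw [← hp, show {ω | F ω = true} = F ⁻¹' {true} from rfl,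
      ← probReal_compl_eq_one_sub (hF (measurableSet_singleton true))]
    congr 1
    ext ω
    simp
  have hpair (b : Bool) : P.real ((fun ω => (X ω, F ω)) ⁻¹' (I ×ˢ {b})) =
      P.real (X ⁻¹' I) * P.real (F ⁻¹' {b}) := by
    rw [mk_preimage_prod, measureReal_def, measureReal_def, measureReal_def,
      hXF.measure_inter_preimage_eq_mul _ _ hI (measurableSet_singleton b), ENNReal.toReal_mul]
  rw [mgf_vote_comp (hX.prodMk hF) hI, hpair, hpair, hF', hq,
    show F ⁻¹' {true} = {ω | F ω = true} from rfl, hp]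
  ring

lemma measure_majority_flipped_le [Fintype ι] [DecidablePred (· ∈ I)] {X : ι → Ω → α}
    {F : ι → Ω → Bool} (hX : ∀ i, Measurable (X i)) (hF : ∀ i, Measurable (F i))
    (hXF : ∀ i, IndepFun (X i) (F i) P) (hindep : iIndepFun (fun i ω => (X i ω, F i ω)) P)
    (hI : MeasurableSet I) (hp0 : 0 < p) (hp : p ≤ 1 / 2) (hq : ∀ i, P.real (X i ⁻¹' I) = q)
    (hflip : ∀ i, P.real {ω | F i ω = true} = p) :
    P {ω | #{i | X i ω ∈ I ∧ ¬ F i ω = true} < #{i | X i ω ∈ I ∧ F i ω = true}} ≤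
      ENNReal.ofReal ((1 - q * (1 - 2 * √(p * (1 - p)))) ^ Fintype.card ι) := by
  set s := √(p * (1 - p))
  have hs2 : s ^ 2 = p * (1 - p) := sq_sqrt (by nlinarith)
  have hps : p ≤ s := le_sqrt_of_sq_le (by nlinarith)
  have hs0 : 0 < s := hp0.trans_le hps
  -- the Chernoff parameter `e^t = s / p` balances the two error terms `p e^t = (1 - p) e^{-t} = s`
  set t := log (s / p)
  have ht : 0 ≤ t := log_nonneg ((one_le_div hp0).2 hps)
  have het : exp t = s / p := exp_log (by positivity)
  set Y : ι → Ω → ℝ := fun i ω => vote I (X i ω, F i ω)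
  have hYmeas (i : ι) : Measurable (Y i) := (measurable_vote hI).comp ((hX i).prodMk (hF i))
  have hYindep : iIndepFun Y P := hindep.comp (fun _ => vote I) fun _ => measurable_vote hI
  have hmgf (i : ι) : mgf (Y i) P t = 1 - q * (1 - 2 * s) := by
    have hright : (1 - p) * (s / p)⁻¹ = s := by
      rw [inv_div, ← mul_div_assoc, div_eq_iff hs0.ne', ← sq, hs2]
      ring
    rw [mgf_vote_of_indepFun (hX i) (hF i) (hXF i) hI (hq i) (hflip i), exp_neg, het,
      mul_div_cancel₀ _ hp0.ne', hright]
    ring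
  have hint : Integrable (fun ω => exp (t * (∑ i, Y i) ω)) P := by
    refine hYindep.integrable_exp_mul_sum hYmeas fun i _ =>
      .of_bound ((hYmeas i).const_mul t).exp.aestronglyMeasurable (exp t) (ae_of_all _ fun ω => ?_)
    rw [norm_of_nonneg (exp_pos _).le, exp_le_exp]
    exact mul_le_of_le_one_right ht (vote_le_one _)
  calc _ ≤ P {ω | 0 ≤ (∑ i, Y i) ω} := measure_mono fun ω hω => by
        simp only [mem_ofPred_eq, Finset.sum_apply, Y, sum_vote] at hω ⊢
        exact sub_nonneg.2 (Nat.cast_le.2 hω.le)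
    _ = ENNReal.ofReal (P.real {ω | 0 ≤ (∑ i, Y i) ω}) := (ofReal_measureReal).symm
    _ ≤ ENNReal.ofReal (exp (-t * 0) * mgf (∑ i, Y i) P t) :=
        ENNReal.ofReal_le_ofReal (measure_ge_le_exp_mul_mgf 0 ht hint)
    _ = _ := by
        rw [hYindep.mgf_sum hYmeas, Finset.prod_congr rfl fun i _ => hmgf i, Finset.prod_const,
          Finset.card_univ]
        simp

end MajorityVote

section Cells

variable {ℓ : ℝ} {K M : ℕ}

-- An `abbrev`, so that membership is decided by `Set.decidableMemIco` and cardinalities over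
-- `cell ℓ k` agree definitionally with those over the explicit `Ico` of the theorem.
abbrev cell (ℓ : ℝ) (k : ℕ) : Set ℝ := Ico (k * ℓ) ((k + 1) * ℓ)

lemma measurableSet_cell (ℓ : ℝ) (k : ℕ) : MeasurableSet (cell ℓ k) := measurableSet_Ico

lemma mem_cell_floor {x : ℝ} (hℓ : 0 < ℓ) (hx : 0 ≤ x) : x ∈ cell ℓ ⌊x / ℓ⌋₊ :=
  ⟨(le_div_iff₀ hℓ).1 (Nat.floor_le (div_nonneg hx hℓ.le)),
    (div_lt_iff₀ hℓ).1 (Nat.lt_floor_add_one _)⟩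

lemma abs_sub_lt_of_mem_cell {x y : ℝ} {k : ℕ} (hx : x ∈ cell ℓ k) (hy : y ∈ cell ℓ k) :
    |x - y| < ℓ := by
  obtain ⟨hx₁, hx₂⟩ := hx
  obtain ⟨hy₁, hy₂⟩ := hy
  rw [abs_sub_lt_iff]
  constructor <;> linarith

noncomputable def vacantCells (ℓ : ℝ) (K : ℕ) (t : Fin M → ℝ) : Finset ℕ :=
  {k ∈ Finset.range K | cell ℓ k ⊆ Icc 0 1 ∧ ∀ y ∈ cell ℓ k, ∀ j, ¬ |y - t j| ≤ ℓ}

lemma Icc_subset_void_union (hℓ : 0 < ℓ) (hK : 1 ≤ K * ℓ) (t : Fin M → ℝ) {occ : ℕ → Prop}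
    (hvac : ∀ k ∈ vacantCells ℓ K t, ¬ occ k) :
    Icc 0 1 ⊆ (⋃ k ∈ {k | k < K ∧ ¬ occ k}, cell ℓ k ∩ Icc 0 1) ∪
      ((⋃ j, Icc (t j - 2 * ℓ) (t j + 2 * ℓ)) ∪ Ioc (1 - ℓ) 1) := by
  intro x hx
  by_cases hx1 : 1 - ℓ < x
  · exact Or.inr (Or.inr ⟨hx1, hx.2⟩)
  set k := ⌊x / ℓ⌋₊
  have hxk : x ∈ cell ℓ k := mem_cell_floor hℓ hx.1
  have hsub : cell ℓ k ⊆ Icc 0 1 := fun y hy =>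
    ⟨(by positivity : (0 : ℝ) ≤ k * ℓ).trans hy.1, by linarith [hy.2, hxk.1]⟩
  by_cases hfar : ∀ y ∈ cell ℓ k, ∀ j, ¬ |y - t j| ≤ ℓ
  · have hkK : k < K := by
      have : ((k : ℝ) + 1) * ℓ ≤ K * ℓ := by linarith [hxk.1]
      exact_mod_cast (lt_add_one (k : ℝ)).trans_le (le_of_mul_le_mul_right this hℓ)
    have hocc := hvac k (Finset.mem_filter.2 ⟨Finset.mem_range.2 hkK, hsub, hfar⟩)
    exact Or.inl (mem_biUnion (x := k) ⟨hkK, hocc⟩ ⟨hxk, hx⟩)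
  · push Not at hfar
    obtain ⟨y, hy, j, hyj⟩ := hfar
    have hxy := abs_sub_lt_of_mem_cell hxk hy
    refine Or.inr (Or.inl (mem_iUnion.2 ⟨j, ?_⟩))
    rw [mem_Icc, ← sub_le_iff_le_add', sub_le_comm, ← abs_sub_le_iff]
    linarith [abs_sub_le (t j) y x, abs_sub_comm (t j) y, abs_sub_comm y x]

lemma volume_near_transmitters_union_Ioc_le (hℓ : 0 ≤ ℓ) (t : Fin M → ℝ) :
    volume ((⋃ j, Icc (t j - 2 * ℓ) (t j + 2 * ℓ)) ∪ Ioc (1 - ℓ) 1) ≤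
      ENNReal.ofReal ((4 * M + 1) * ℓ) :=
  calc _ ≤ (∑ j, volume (Icc (t j - 2 * ℓ) (t j + 2 * ℓ))) + volume (Ioc (1 - ℓ) 1) :=
        (measure_union_le _ _).trans (add_le_add_left (measure_iUnion_fintype_le _ _) _)
    _ = (∑ _j : Fin M, ENNReal.ofReal (4 * ℓ)) + ENNReal.ofReal ℓ := by
        simp only [Real.volume_Icc, Real.volume_Ioc]
        ring_nf
    _ = ENNReal.ofReal ((4 * M + 1) * ℓ) := by
        rw [Finset.sum_const, Finset.card_univ, Fintype.card_fin, nsmul_eq_mul,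
          ← ENNReal.ofReal_natCast M, ← ENNReal.ofReal_mul (Nat.cast_nonneg M),
          ← ENNReal.ofReal_add (by positivity) hℓ]
        ring_nf

lemma one_sub_volume_void_le (hℓ : 0 < ℓ) (hK : 1 ≤ K * ℓ) (t : Fin M → ℝ) {occ : ℕ → Prop}
    (hvac : ∀ k ∈ vacantCells ℓ K t, ¬ occ k) :
    1 - (volume (⋃ k ∈ {k | k < K ∧ ¬ occ k}, cell ℓ k ∩ Icc 0 1)).toReal ≤
      (4 * M + 1) * ℓ := by
  set U := ⋃ k ∈ {k | k < K ∧ ¬ occ k}, cell ℓ k ∩ Icc 0 1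
  have hU : volume U ≠ ⊤ := measure_ne_top_of_subset
    (iUnion₂_subset fun _ _ => inter_subset_right) (by simp)
  have hcover : 1 ≤ volume U + ENNReal.ofReal ((4 * M + 1) * ℓ) :=
    calc 1 = volume (Icc (0 : ℝ) 1) := by simp
      _ ≤ volume U + _ := (measure_mono (Icc_subset_void_union hℓ hK t hvac)).trans
          (measure_union_le _ _)
      _ ≤ _ := add_le_add_right (volume_near_transmitters_union_Ioc_le hℓ.le t) _
  have := ENNReal.toReal_mono (by finiteness) hcover
  rw [ENNReal.toReal_one, ENNReal.toReal_add hU ENNReal.ofReal_ne_top,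
    ENNReal.toReal_ofReal (by positivity)] at this
  linarith

end Cells

lemma tendsto_measure_one_of_compl_subset {Ω ι : Type*} [MeasurableSpace Ω] {P : Measure Ω}
    [IsProbabilityMeasure P] {l : Filter ι} {A E : ι → Set Ω}
    (hE : Tendsto (fun n => P (E n)) l (nhds 0)) (hA : ∀ᶠ n in l, (E n)ᶜ ⊆ A n) :
    Tendsto (fun n => P (A n)) l (nhds 1) := by
  have h₁ : Tendsto (fun n => 1 - P (E n)) l (nhds 1) := by
    simpa using ENNReal.Tendsto.sub tendsto_const_nhds hE (Or.inl ENNReal.one_ne_top)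
  refine tendsto_of_tendsto_of_tendsto_of_le_of_le' h₁ tendsto_const_nhds ?_
    (Eventually.of_forall fun _ => prob_le_one)
  filter_upwards [hA] with n hn
  calc 1 - P (E n) = P univ - P (E n) := by rw [measure_univ]
    _ ≤ P (univ \ E n) := le_measure_sdiff
    _ ≤ P (A n) := measure_mono (by rwa [← compl_eq_univ_sdiff])

lemma one_le_ceil_div_mul_div {a b : ℝ} (ha : 0 < a) (hb : 0 < b) :
    1 ≤ (⌈b / a⌉₊ : ℝ) * (a / b) :=
  calc 1 = b / a * (a / b) := by field_simp
    _ ≤ _ := mul_le_mul_of_nonneg_right (Nat.le_ceil _) (by positivity)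

lemma eventually_one_le_mul_log_le {c : ℝ} (hc : 0 < c) :
    ∀ᶠ n : ℕ in atTop, 1 ≤ c * log n ∧ c * log n ≤ n := by
  have hlog := tendsto_log_atTop.comp tendsto_natCast_atTop_atTop
  have hsmall := tendsto_natCast_atTop_atTop.eventually
    (isLittleO_log_id_atTop.bound (inv_pos.2 hc))
  filter_upwards [hlog.eventually_ge_atTop c⁻¹, hsmall] with n h₁ h₂
  simp only [Function.comp_apply, norm_eq_abs, id_eq] at h₁ h₂
  constructor
  · rwa [← inv_mul_le_iff₀ hc, mul_one]
  · rw [← le_inv_mul_iff₀ hc]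
    exact (le_abs_self _).trans (h₂.trans_eq (by rw [abs_of_nonneg (Nat.cast_nonneg n)]))

lemma measureReal_preimage_eq_volume {Ω : Type*} [MeasurableSpace Ω] {P : Measure Ω}
    {X : Ω → ℝ} (hX : Measurable X) (hunif : P.map X = volume.restrict (Icc 0 1))
    {S : Set ℝ} (hS : MeasurableSet S) (hS₁ : S ⊆ Icc 0 1) :
    P.real (X ⁻¹' S) = volume.real S := by
  rw [← map_measureReal_apply hX hS, hunif, measureReal_restrict_apply hS, inter_eq_left.2 hS₁]

lemma one_sub_pow_le_inv_sq {n : ℕ} (hn : 0 < n) {x : ℝ} (hx : x ≤ 1)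
    (h : 2 * log n ≤ n * x) : (1 - x) ^ n ≤ ((n : ℝ) ^ 2)⁻¹ :=
  calc (1 - x) ^ n ≤ exp (-x) ^ n := pow_le_pow_left₀ (by linarith) (one_sub_le_exp_neg x) n
    _ = exp (-(n * x)) := by rw [← exp_nat_mul]; ring_nf
    _ ≤ exp (-log ((n : ℝ) ^ 2)) := exp_le_exp.2 (by rw [log_pow]; push_cast; linarith)
    _ = ((n : ℝ) ^ 2)⁻¹ := by rw [exp_neg, exp_log (by positivity)]

section Recovery

variable {Ω ι : Type*} [MeasurableSpace Ω] {P : Measure Ω} {ℓ : ℝ} {k K M : ℕ}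

def MajorityInCell [Fintype ι] (ℓ : ℝ) (k : ℕ) (x : ι → ℝ) (r : ι → Prop) [DecidablePred r] :
    Prop :=
  #{i | x i ∈ cell ℓ k ∧ ¬ r i} < #{i | x i ∈ cell ℓ k ∧ r i}

lemma majorityInCell_congr [Fintype ι] {x : ι → ℝ} {r r' : ι → Prop} [DecidablePred r]
    [DecidablePred r'] (h : ∀ i, x i ∈ cell ℓ k → (r i ↔ r' i)) :
    MajorityInCell ℓ k x r ↔ MajorityInCell ℓ k x r' := by
  unfold MajorityInCell
  rw [Finset.filter_congr fun i _ => and_congr_right fun hi => not_congr (h i hi),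
    Finset.filter_congr fun i _ => and_congr_right fun hi => h i hi]

lemma one_sub_volume_declared_void_le [Fintype ι] (hℓ : 0 < ℓ) (hK : 1 ≤ K * ℓ)
    (t : Fin M → ℝ) {x : ι → ℝ} {b : ι → Bool}
    (h : ∀ k ∈ vacantCells ℓ K t, ¬ MajorityInCell ℓ k x (b · = true)) :
    1 - (volume (⋃ k ∈ {k | k < K ∧
        ¬ MajorityInCell ℓ k x fun i => Xor' (∃ j, |x i - t j| ≤ ℓ) (b i = true)},
      cell ℓ k ∩ Icc 0 1)).toReal ≤ (4 * M + 1) * ℓ := by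
  refine one_sub_volume_void_le hℓ hK t fun k hk => ?_
  have hfar := (Finset.mem_filter.1 hk).2.2
  rw [majorityInCell_congr (r' := (b · = true)) fun i hi => ?_]
  · exact h k hk
  · simp [Xor', fun j => hfar _ hi j]

lemma measure_vacant_cell_flipped_le [IsProbabilityMeasure P] {n : ℕ} (hn : 0 < n)
    {X : Fin n → Ω → ℝ} {F : Fin n → Ω → Bool} (hX : ∀ i, Measurable (X i))
    (hF : ∀ i, Measurable (F i)) (hunif : ∀ i, P.map (X i) = volume.restrict (Icc 0 1))
    {p : ℝ} (hp0 : 0 < p) (hp : p ≤ 1 / 2) (hflip : ∀ i, P.real {ω | F i ω = true} = p)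
    (hXF : ∀ i, IndepFun (X i) (F i) P) (hindep : iIndepFun (fun i ω => (X i ω, F i ω)) P)
    (t : Fin M → ℝ) (hℓ₀ : 0 ≤ ℓ) (hℓ₁ : ℓ ≤ 1) (hKn : K ≤ n)
    (hdecay : 2 * log n ≤ n * (ℓ * (1 - 2 * √(p * (1 - p))))) :
    P (⋃ k ∈ vacantCells ℓ K t, {ω | MajorityInCell ℓ k (X · ω) (F · ω = true)}) ≤
      (n : ℝ≥0∞)⁻¹ := by
  have hcell (k : ℕ) (hk : k ∈ vacantCells ℓ K t) :
      P {ω | MajorityInCell ℓ k (X · ω) (F · ω = true)} ≤ ENNReal.ofReal ((n : ℝ) ^ 2)⁻¹ := by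
    have hsub := (Finset.mem_filter.1 hk).2.1
    have hq (i : Fin n) : P.real (X i ⁻¹' cell ℓ k) = ℓ := by
      rw [measureReal_preimage_eq_volume (hX i) (hunif i) (measurableSet_cell ℓ k) hsub,
        cell, volume_real_Ico_of_le (by nlinarith)]
      ring
    refine (measure_majority_flipped_le hX hF hXF hindep (measurableSet_cell ℓ k) hp0 hp hq
      hflip).trans (ENNReal.ofReal_le_ofReal ?_)
    rw [Fintype.card_fin]
    exact one_sub_pow_le_inv_sq hn
      (hℓ₁.trans' (mul_le_of_le_one_right hℓ₀ (by linarith [sqrt_nonneg (p * (1 - p))]))) hdecay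
  calc _ ≤ ∑ k ∈ vacantCells ℓ K t, P {ω | MajorityInCell ℓ k (X · ω) (F · ω = true)} :=
        measure_biUnion_finset_le _ _
    _ ≤ ∑ _k ∈ vacantCells ℓ K t, ENNReal.ofReal ((n : ℝ) ^ 2)⁻¹ := Finset.sum_le_sum hcell
    _ ≤ n * ENNReal.ofReal ((n : ℝ) ^ 2)⁻¹ := by
        rw [Finset.sum_const, nsmul_eq_mul]
        gcongr
        exact_mod_cast ((Finset.card_filter_le _ _).trans (Finset.card_range K).le).trans hKn
    _ = (n : ℝ≥0∞)⁻¹ := by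
        rw [← ENNReal.ofReal_natCast, ← ENNReal.ofReal_mul (by positivity), sq, mul_inv,
          ← mul_assoc, mul_inv_cancel₀ (by positivity), one_mul,
          ENNReal.ofReal_inv_of_pos (by positivity), ENNReal.ofReal_natCast]

end Recovery

theorem whitespace_recovery_unreliable_general
    {Ω : Type*} [MeasurableSpace Ω] (P : Measure Ω) [IsProbabilityMeasure P]
    (X : (n : ℕ) → Fin n → Ω → ℝ) (F : (n : ℕ) → Fin n → Ω → Bool)
    (hXmeas : ∀ n i, Measurable (X n i)) (hFmeas : ∀ n i, Measurable (F n i))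
    (hunif : ∀ n i, Measure.map (X n i) P = volume.restrict (Set.Icc (0:ℝ) 1))
    (p : ℝ) (hp0 : 0 < p) (hp : p < 1/2)
    (hflip : ∀ n i, P {ω | F n i ω = true} = ENNReal.ofReal p)
    (hXF : ∀ n i, IndepFun (X n i) (F n i) P)
    (hindep : ∀ n, iIndepFun
      (fun i : Fin n => fun ω => (X n i ω, F n i ω)) P)
    (M : ℕ) (t : Fin M → ℝ) :
    ∃ c₀ : ℝ, 0 < c₀ ∧ ∀ c : ℝ, c₀ ≤ c →
      ∃ C : ℝ, 0 < C ∧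
        Tendsto
          (fun n : ℕ =>
            P {ω | 1 -
                (volume (⋃ k ∈ {k : ℕ | k < ⌈(n : ℝ) / (c * Real.log n)⌉₊ ∧
                    -- majority rule declares interval `k` unoccupied
                    ¬ ((Finset.univ.filter fun i : Fin n =>
                          X n i ω ∈ Set.Ico ((k : ℝ) * (c * Real.log n / n))
                              (((k : ℝ) + 1) * (c * Real.log n / n)) ∧
                          Xor' (∃ j, |X n i ω - t j| ≤ c * Real.log n / n)
                            (F n i ω = true)).card
                        > (Finset.univ.filter fun i : Fin n =>
                          X n i ω ∈ Set.Ico ((k : ℝ) * (c * Real.log n / n))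
                              (((k : ℝ) + 1) * (c * Real.log n / n)) ∧
                          ¬ Xor' (∃ j, |X n i ω - t j| ≤ c * Real.log n / n)
                            (F n i ω = true)).card)},
                  Set.Ico ((k : ℝ) * (c * Real.log n / n))
                      (((k : ℝ) + 1) * (c * Real.log n / n))
                    ∩ Set.Icc (0:ℝ) 1)).toReal
              ≤ C * Real.log n / n})
          atTop (nhds 1) := by
  set θ := 1 - 2 * √(p * (1 - p))
  have hθ : 0 < θ := by
    have : √(p * (1 - p)) < 1 / 2 := (sqrt_lt' (by norm_num)).2 (by nlinarith)
    linarith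
  refine ⟨2 / θ, by positivity, fun c hc => ?_⟩
  have hc₀ : 0 < c := (by positivity : 0 < 2 / θ).trans_le hc
  have hcθ : 2 ≤ c * θ := (div_le_iff₀ hθ).1 hc
  refine ⟨(4 * M + 1) * c, by positivity, ?_⟩
  have hscale := (eventually_one_le_mul_log_le hc₀).and (eventually_gt_atTop 0)
  refine tendsto_measure_one_of_compl_subset (E := fun n =>
    ⋃ k ∈ vacantCells (c * log n / n) ⌈n / (c * log n)⌉₊ t,
      {ω | MajorityInCell (c * log n / n) k (X n · ω) (F n · ω = true)}) ?_ ?_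
  · refine tendsto_of_tendsto_of_tendsto_of_le_of_le' tendsto_const_nhds
      ENNReal.tendsto_inv_nat_nhds_zero (Eventually.of_forall fun _ => zero_le) ?_
    filter_upwards [hscale] with n ⟨⟨h₁, h₂⟩, hn⟩
    refine measure_vacant_cell_flipped_le hn (hXmeas n) (hFmeas n) (hunif n) hp0 hp.le
      (fun i => ?_) (hXF n) (hindep n) t (by positivity) ((div_le_one (by positivity)).2 h₂)
      (Nat.ceil_le.2 (div_le_self n.cast_nonneg h₁)) ?_
    · rw [measureReal_def, hflip, ENNReal.toReal_ofReal hp0.le]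
    · calc 2 * log n ≤ c * θ * log n := by nlinarith [log_natCast_nonneg n]
        _ = n * (c * log n / n * θ) := by field_simp
  · filter_upwards [hscale] with n ⟨⟨h₁, _⟩, hn⟩ ω hω
    have hℓ : 0 < c * log n / n := div_pos (by linarith) (by positivity)
    refine (one_sub_volume_declared_void_le hℓ (one_le_ceil_div_mul_div (by linarith)
      (by positivity)) t fun k hk hmaj => hω (mem_iUnion₂.2 ⟨k, hk, hmaj⟩)).trans_eq ?_
    ring

/-- Whitespace recovery with unreliable sensors: each sensor's binary reading is
flipped independently with probability `p < 1/2`.  With radio range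
`r_s(n) = (c log n)/n` for a sufficiently large constant `c`, partitioning
`[0,1]` into intervals of length `(c log n)/n` and declaring an interval
occupied iff a majority of its sensors read `1`, there is
`ε(n) = C (log n)/n = Θ((log n)/n)` such that `P(1 - A_void ≤ ε(n)) → 1`,
where `A_void` is the total length of the intervals declared unoccupied. -/
theorem whitespace_recovery_unreliable
    {Ω : Type*} [MeasurableSpace Ω] (P : Measure Ω) [IsProbabilityMeasure P]
    (X : (n : ℕ) → Fin n → Ω → ℝ) (F : (n : ℕ) → Fin n → Ω → Bool)
    (hXmeas : ∀ n i, Measurable (X n i)) (hFmeas : ∀ n i, Measurable (F n i))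
    (hunif : ∀ n i, Measure.map (X n i) P = volume.restrict (Set.Icc (0:ℝ) 1))
    (p : ℝ) (hp0 : 0 < p) (hp : p < 1/2)
    (hflip : ∀ n i, P {ω | F n i ω = true} = ENNReal.ofReal p)
    (hXF : ∀ n i, IndepFun (X n i) (F n i) P)
    (hindep : ∀ n, iIndepFun
      (fun i : Fin n => fun ω => (X n i ω, F n i ω)) P)
    (M : ℕ) (t : Fin M → ℝ) (ht : ∀ j, t j ∈ Set.Icc (0:ℝ) 1) :
    ∃ c₀ : ℝ, 0 < c₀ ∧ ∀ c : ℝ, c₀ ≤ c →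
      ∃ C : ℝ, 0 < C ∧
        Tendsto
          (fun n : ℕ =>
            P {ω | 1 -
                (volume (⋃ k ∈ {k : ℕ | k < ⌈(n : ℝ) / (c * Real.log n)⌉₊ ∧
                    -- majority rule declares interval `k` unoccupied
                    ¬ ((Finset.univ.filter fun i : Fin n =>
                          X n i ω ∈ Set.Ico ((k : ℝ) * (c * Real.log n / n))
                              (((k : ℝ) + 1) * (c * Real.log n / n)) ∧
                          Xor' (∃ j, |X n i ω - t j| ≤ c * Real.log n / n)
                            (F n i ω = true)).card
                        > (Finset.univ.filter fun i : Fin n =>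
                          X n i ω ∈ Set.Ico ((k : ℝ) * (c * Real.log n / n))
                              (((k : ℝ) + 1) * (c * Real.log n / n)) ∧
                          ¬ Xor' (∃ j, |X n i ω - t j| ≤ c * Real.log n / n)
                            (F n i ω = true)).card)},
                  Set.Ico ((k : ℝ) * (c * Real.log n / n))
                      (((k : ℝ) + 1) * (c * Real.log n / n))
                    ∩ Set.Icc (0:ℝ) 1)).toReal
              ≤ C * Real.log n / n})
          atTop (nhds 1) :=
  whitespace_recovery_unreliable_general P X F hXmeas hFmeas hunif p hp0 hp hflip hXF hindep M t
end

section
/- With the optimal density f_λ from the Euler–Lagrange condition substituted, the minimum miss probability equals P_f^{opt} = (1 - 2 r_s)^n / (∫₀¹ f_X(x)^{-1/(n-1)} dx)^{n-1}, assuming f_X > 0 on [0,1] and the stated f_λ is a valid density. -/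
/-!
Write `J = f_X^{-1/(n-1)}` and `t = (μ / (2 n r_s))^{1/(n-1)}`, so that the optimal density satisfies
`1 - 2 r_s f_λ = t J`. Integrating this against Lebesgue measure on `[0,1]` and using `∫ f_λ = 1`
pins down the multiplier: `t ∫ J = 1 - 2 r_s`. Since `J^n f_X = J`, the miss probability is
`t^n ∫ J = (t ∫ J)^n / (∫ J)^{n-1}`.
-/

open MeasureTheory

lemma div_rpow_one_div_eq_mul_rpow_neg {c a : ℝ} (hc : 0 ≤ c) (ha : 0 ≤ a) (p : ℝ) :
    (c / a) ^ (1 / p) = c ^ (1 / p) * a ^ (-1 / p) := by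
  rw [Real.div_rpow hc ha, neg_div, Real.rpow_neg ha, div_eq_mul_inv]

/-- The exponent `-1/(n-1)` is the fixed point of `p ↦ n p + 1`. -/
lemma rpow_neg_one_div_pred_pow_mul_self {a : ℝ} (ha : 0 < a) {n : ℕ} (hn : (n : ℝ) ≠ 1) :
    (a ^ (-1 / ((n : ℝ) - 1))) ^ n * a = a ^ (-1 / ((n : ℝ) - 1)) := by
  have hexp : -1 / ((n : ℝ) - 1) * n + 1 = -1 / ((n : ℝ) - 1) := by
    field_simp [sub_ne_zero.mpr hn]
    ring
  rw [← Real.rpow_natCast, ← Real.rpow_mul ha.le, ← Real.rpow_add_one ha.ne', hexp]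

lemma mul_integral_eq_one_sub_of_integral_eq_one {α : Type*} [MeasurableSpace α]
    {ν : Measure α} [IsProbabilityMeasure ν] {g J : α → ℝ} {c t : ℝ} (hJ : Integrable J ν)
    (hgJ : ∀ᵐ x ∂ν, c * g x = 1 - t * J x) (hg : ∫ x, g x ∂ν = 1) :
    t * ∫ x, J x ∂ν = 1 - c := by
  have hc : c = 1 - t * ∫ x, J x ∂ν :=
    calc c = ∫ x, c * g x ∂ν := by rw [integral_const_mul, hg, mul_one]
      _ = ∫ x, (1 - t * J x) ∂ν := integral_congr_ae hgJ
      _ = 1 - t * ∫ x, J x ∂ν := by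
        rw [integral_sub (integrable_const 1) (hJ.const_mul t), integral_const_mul]
        simp
  linarith

lemma pow_mul_eq_mul_pow_div_pow_pred {t I : ℝ} {n : ℕ} (hn : n ≠ 0) (hI : I ≠ 0) :
    t ^ n * I = (t * I) ^ n / I ^ (n - 1) := by
  obtain ⟨m, rfl⟩ := Nat.exists_eq_succ_of_ne_zero hn
  rw [Nat.succ_sub_one, mul_pow, pow_succ' I, ← mul_assoc,
    mul_div_cancel_right₀ _ (pow_ne_zero m hI)]

instance isProbabilityMeasure_restrict_Icc_zero_one :
    IsProbabilityMeasure (volume.restrict (Set.Icc (0 : ℝ) 1)) :=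
  ⟨by simp [Real.volume_Icc]⟩

theorem optimal_miss_probability_closed_form_general
    (fX : ℝ → ℝ)
    (hfXpos : ∀ x ∈ Set.Icc (0:ℝ) 1, 0 < fX x)
    (rs : ℝ) (hrs : 0 < rs) (hrs1 : 2 * rs < 1) (n : ℕ) (hn : 2 ≤ n)
    (μ : ℝ) (hμ : 0 < μ)
    (g : ℝ → ℝ)
    (hg : ∀ x ∈ Set.Icc (0:ℝ) 1,
      g x = (1 - (μ / (2 * n * rs * fX x)) ^ ((1:ℝ) / (n - 1))) / (2 * rs))
    (hgint : ∫ x in Set.Icc (0:ℝ) 1, g x = 1)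
    (hint : IntegrableOn (fun x => (fX x) ^ (-(1:ℝ) / (n - 1))) (Set.Icc (0:ℝ) 1)) :
    ∫ x in Set.Icc (0:ℝ) 1, (1 - 2 * rs * g x) ^ n * fX x
      = (1 - 2 * rs) ^ n
        / (∫ x in Set.Icc (0:ℝ) 1, (fX x) ^ (-(1:ℝ) / (n - 1))) ^ (n - 1) := by
  set t : ℝ := (μ / (2 * n * rs)) ^ ((1:ℝ) / (n - 1))
  set J : ℝ → ℝ := fun x => fX x ^ (-(1:ℝ) / (n - 1))
  have hn1 : (n : ℝ) ≠ 1 := by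
    have : (2 : ℝ) ≤ n := by exact_mod_cast hn
    linarith
  have hprofile : ∀ x ∈ Set.Icc (0:ℝ) 1, 2 * rs * g x = 1 - t * J x := fun x hx => by
    rw [hg x hx, mul_div_cancel₀ _ (by positivity), ← div_div,
      div_rpow_one_div_eq_mul_rpow_neg (by positivity) (hfXpos x hx).le]
  have hmass : t * ∫ x in Set.Icc (0:ℝ) 1, J x = 1 - 2 * rs :=
    mul_integral_eq_one_sub_of_integral_eq_one hint
      (ae_restrict_of_forall_mem measurableSet_Icc hprofile) hgint
  have hmiss : ∫ x in Set.Icc (0:ℝ) 1, (1 - 2 * rs * g x) ^ n * fX x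
      = t ^ n * ∫ x in Set.Icc (0:ℝ) 1, J x := by
    rw [← integral_const_mul]
    refine setIntegral_congr_fun measurableSet_Icc fun x hx => ?_
    rw [hprofile x hx, sub_sub_cancel, mul_pow, mul_assoc,
      rpow_neg_one_div_pred_pow_mul_self (hfXpos x hx) hn1]
  have hJ_ne : ∫ x in Set.Icc (0:ℝ) 1, J x ≠ 0 := by
    rintro h
    rw [h, mul_zero] at hmass
    linarith
  rw [hmiss, pow_mul_eq_mul_pow_div_pow_pred (by omega) hJ_ne, hmass]

/-- Minimum miss probability with the optimal sensor density: if
`f_λ(x) = (1 - (μ / (2 n r_s f_X(x)))^{1/(n-1)}) / (2 r_s)` is a valid density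
(`0 ≤ f_λ ≤ 1/(2 r_s)` and `∫₀¹ f_λ = 1`) for a transmitter density `f_X > 0`
on `[0,1]`, then
`∫₀¹ (1 - 2 r_s f_λ(x))ⁿ f_X(x) dx = (1 - 2 r_s)ⁿ / (∫₀¹ f_X(x)^{-1/(n-1)} dx)^{n-1}`. -/
theorem optimal_miss_probability_closed_form
    (fX : ℝ → ℝ) (hfXmeas : Measurable fX)
    (hfXpos : ∀ x ∈ Set.Icc (0:ℝ) 1, 0 < fX x)
    (hfXint : ∫ x in Set.Icc (0:ℝ) 1, fX x = 1)
    (rs : ℝ) (hrs : 0 < rs) (hrs1 : 2 * rs < 1) (n : ℕ) (hn : 2 ≤ n)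
    (μ : ℝ) (hμ : 0 < μ)
    (g : ℝ → ℝ)
    (hg : ∀ x ∈ Set.Icc (0:ℝ) 1,
      g x = (1 - (μ / (2 * n * rs * fX x)) ^ ((1:ℝ) / (n - 1))) / (2 * rs))
    (hgnonneg : ∀ x ∈ Set.Icc (0:ℝ) 1, 0 ≤ g x)
    (hgcap : ∀ x ∈ Set.Icc (0:ℝ) 1, 2 * rs * g x ≤ 1)
    (hgint : ∫ x in Set.Icc (0:ℝ) 1, g x = 1)
    (hint : IntegrableOn (fun x => (fX x) ^ (-(1:ℝ) / (n - 1))) (Set.Icc (0:ℝ) 1)) :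
    ∫ x in Set.Icc (0:ℝ) 1, (1 - 2 * rs * g x) ^ n * fX x
      = (1 - 2 * rs) ^ n
        / (∫ x in Set.Icc (0:ℝ) 1, (fX x) ^ (-(1:ℝ) / (n - 1))) ^ (n - 1) :=
  optimal_miss_probability_closed_form_general fX hfXpos rs hrs hrs1 n hn μ hμ g hg hgint hint
end

section
/- For the triangular density f_X(x) = 4x on [0,1/2] and 4(1-x) on [1/2,1], and n ≥ 3, we have ∫₀¹ f_X(x)^{-1/(n-1)} dx = ((n-1)/(n-2)) · 2^{-1/(n-1)}, and consequently P_f^{opt} = (1-2r_s)^n / (((n-1)/(n-2)) · 2^{-1/(n-1)})^{n-1}, whose denominator converges to e/2 as n → ∞. -/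
open MeasureTheory Filter

lemma tri_integral (n : ℕ) (hn : 3 ≤ n) :
    ∫ x in Set.Icc (0:ℝ) 1,
        (if x ≤ 1/2 then 4 * x else 4 * (1 - x)) ^ (-(1:ℝ) / (n - 1))
      = ((n : ℝ) - 1) / ((n : ℝ) - 2) * (2:ℝ) ^ (-(1:ℝ) / ((n : ℝ) - 1)) := by
  have hN : (2:ℝ) ≤ (n:ℝ) - 1 := by
    have : (3:ℝ) ≤ (n:ℝ) := by exact_mod_cast hn
    linarith
  set p : ℝ := -(1:ℝ) / ((n:ℝ) - 1) with hp_def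
  have hp0 : -1 < p := by
    rw [hp_def, neg_div, neg_lt_neg_iff, div_lt_one (by linarith)]
    linarith
  have hpneg : p < 0 := by
    rw [hp_def]
    exact div_neg_of_neg_of_pos (by norm_num) (by linarith)
  have hp1 : 0 < p + 1 := by linarith
  have hpne : p ≠ 0 := ne_of_lt hpneg
  have hint1 : IntervalIntegrable (fun x : ℝ => (4 * x) ^ p) volume 0 (1/2) := by
    have := (intervalIntegral.intervalIntegrable_rpow' (a := 0) (b := 2) hp0).comp_mul_left (c := 4)
    norm_num at this
    exact this
  have hint2 : IntervalIntegrable (fun x : ℝ => (4 * (1 - x)) ^ p) volume (1/2) 1 := by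
    have := hint1.comp_sub_left 1
    norm_num at this
    exact this.symm
  set f : ℝ → ℝ := fun x => (if x ≤ 1/2 then 4 * x else 4 * (1 - x)) ^ p with hf_def
  have heq1 : Set.EqOn f (fun x : ℝ => (4 * x) ^ p) (Set.uIcc 0 (1/2)) := by
    intro x hx
    rw [Set.uIcc_of_le (by norm_num)] at hx
    simp only [hf_def]
    rw [if_pos hx.2]
  have heq2 : Set.EqOn f (fun x : ℝ => (4 * (1 - x)) ^ p) (Set.uIcc (1/2) 1) := by
    intro x hx
    rw [Set.uIcc_of_le (by norm_num)] at hx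
    by_cases h : x ≤ 1/2
    · have hx2 : x = 1/2 := le_antisymm h hx.1
      subst hx2; norm_num [hf_def]
    · simp only [hf_def]; rw [if_neg h]
  have hintf1 : IntervalIntegrable f volume 0 (1/2) :=
    hint1.congr (by
      intro x hx
      exact (heq1 (Set.uIoc_subset_uIcc hx)).symm)
  have hintf2 : IntervalIntegrable f volume (1/2) 1 :=
    hint2.congr (by
      intro x hx
      exact (heq2 (Set.uIoc_subset_uIcc hx)).symm)
  have hbase : ∫ x in (0:ℝ)..(1/2), (4 * x) ^ p
      = (4:ℝ) ^ p * ((1/2 : ℝ) ^ (p+1) / (p+1)) := by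
    have h1 : Set.EqOn (fun x : ℝ => (4 * x) ^ p)
        (fun x : ℝ => (4:ℝ) ^ p * x ^ p) (Set.uIcc 0 (1/2)) := by
      intro x hx
      rw [Set.uIcc_of_le (by norm_num)] at hx
      exact Real.mul_rpow (by norm_num) hx.1
    rw [intervalIntegral.integral_congr h1, intervalIntegral.integral_const_mul,
      integral_rpow (Or.inl hp0), Real.zero_rpow (by linarith)]
    ring
  have hsplit : (∫ x in Set.Icc (0:ℝ) 1, f x)
      = (∫ x in (0:ℝ)..(1/2), f x) + ∫ x in (1/2:ℝ)..1, f x := by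
    rw [MeasureTheory.integral_Icc_eq_integral_Ioc,
      ← intervalIntegral.integral_of_le (by norm_num : (0:ℝ) ≤ 1),
      intervalIntegral.integral_add_adjacent_intervals hintf1 hintf2]
  have hval2 : (∫ x in (1/2:ℝ)..1, (4 * (1 - x)) ^ p) = ∫ x in (0:ℝ)..(1/2), (4 * x) ^ p := by
    have h := intervalIntegral.integral_comp_sub_left (a := (1/2:ℝ)) (b := 1)
      (fun y : ℝ => (4 * y) ^ p) 1
    norm_num at h ⊢
    exact h
  rw [hsplit, intervalIntegral.integral_congr heq1, intervalIntegral.integral_congr heq2,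
    hval2, hbase]
  -- algebra
  have h4 : (4:ℝ) ^ p = (2:ℝ) ^ (2 * p) := by
    rw [show (4:ℝ) = (2:ℝ) ^ (2:ℝ) by
        rw [show ((2:ℝ):ℝ) = ((2:ℕ):ℝ) by norm_num, Real.rpow_natCast]; norm_num,
      ← Real.rpow_mul (by norm_num)]
  have hhalf : ((1/2 : ℝ)) ^ (p+1) = (2:ℝ) ^ (-(p+1)) := by
    rw [show (1/2 : ℝ) = (2:ℝ) ^ (-1 : ℝ) by rw [Real.rpow_neg_one]; norm_num,
      ← Real.rpow_mul (by norm_num)]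
    ring_nf
  have hkey : (2:ℝ) * ((4:ℝ) ^ p * (1/2:ℝ) ^ (p+1)) = (2:ℝ) ^ p := by
    rw [h4, hhalf, show ((2:ℝ) * ((2:ℝ) ^ (2*p) * (2:ℝ) ^ (-(p+1)))) =
        (2:ℝ) ^ (1:ℝ) * ((2:ℝ) ^ (2*p) * (2:ℝ) ^ (-(p+1))) by rw [Real.rpow_one],
      ← Real.rpow_add (by norm_num), ← Real.rpow_add (by norm_num)]
    congr 1
    ring
  have hpadd : p + 1 = ((n:ℝ) - 2) / ((n:ℝ) - 1) := by
    rw [hp_def]; field_simp; ring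
  have hn1 : (n:ℝ) - 1 ≠ 0 := by linarith
  have hn2 : (n:ℝ) - 2 ≠ 0 := by nlinarith
  calc (4:ℝ) ^ p * ((1/2:ℝ) ^ (p+1) / (p+1)) + (4:ℝ) ^ p * ((1/2:ℝ) ^ (p+1) / (p+1))
      = (2:ℝ) * ((4:ℝ) ^ p * (1/2:ℝ) ^ (p+1)) / (p+1) := by ring
    _ = (2:ℝ) ^ p / (p+1) := by rw [hkey]
    _ = ((n:ℝ) - 1) / ((n:ℝ) - 2) * (2:ℝ) ^ p := by
        rw [hpadd, div_div_eq_mul_div]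
        field_simp

lemma tri_tendsto :
    Tendsto
      (fun n : ℕ =>
        (((n : ℝ) - 1) / ((n : ℝ) - 2)
            * (2:ℝ) ^ (-(1:ℝ) / ((n : ℝ) - 1))) ^ (n - 1))
      atTop (nhds (Real.exp 1 / 2)) := by
  have hA : Tendsto (fun n : ℕ => (1 + 1/((n:ℝ) - 2)) ^ (n - 2)) atTop
      (nhds (Real.exp 1)) := by
    have h0 := Real.tendsto_one_add_div_pow_exp (1:ℝ)
    have h1 : Tendsto (fun n : ℕ => n - 2) atTop atTop := tendsto_sub_atTop_nat 2
    have h2 := h0.comp h1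
    apply h2.congr'
    filter_upwards [eventually_ge_atTop 2] with n hn
    have : ((n - 2 : ℕ) : ℝ) = (n:ℝ) - 2 := by
      push_cast [Nat.cast_sub hn]; ring
    simp only [Function.comp_apply, this, one_div]
  have hB : Tendsto (fun n : ℕ => 1 + 1/((n:ℝ) - 2)) atTop (nhds 1) := by
    have h1 : Tendsto (fun n : ℕ => (n:ℝ) - 2) atTop atTop :=
      tendsto_atTop_add_const_right _ (-2) tendsto_natCast_atTop_atTop
    have h2 : Tendsto (fun n : ℕ => 1/((n:ℝ) - 2)) atTop (nhds 0) := by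
      simpa [one_div, Pi.inv_def] using h1.inv_tendsto_atTop
    simpa using (tendsto_const_nhds (x := (1:ℝ))).add h2
  have hlim : Tendsto
      (fun n : ℕ => (1 + 1/((n:ℝ) - 2)) ^ (n - 2) * ((1 + 1/((n:ℝ) - 2)) * (1/2)))
      atTop (nhds (Real.exp 1 / 2)) := by
    have := hA.mul (hB.mul (tendsto_const_nhds (x := (1/2:ℝ))))
    simpa [div_eq_mul_inv] using this
  apply hlim.congr'
  filter_upwards [eventually_ge_atTop 3] with n hn
  have hN : (2:ℝ) ≤ (n:ℝ) - 1 := by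
    have : (3:ℝ) ≤ (n:ℝ) := by exact_mod_cast hn
    linarith
  have hn1 : (n:ℝ) - 1 ≠ 0 := by linarith
  have hn2 : (n:ℝ) - 2 ≠ 0 := by nlinarith
  have hfrac : ((n:ℝ) - 1) / ((n:ℝ) - 2) = 1 + 1/((n:ℝ) - 2) := by
    field_simp
    ring
  have hpow2 : ((2:ℝ) ^ (-(1:ℝ) / ((n:ℝ) - 1))) ^ (n - 1) = 1/2 := by
    have hcast : ((n - 1 : ℕ) : ℝ) = (n:ℝ) - 1 := by
      push_cast [Nat.cast_sub (by omega : 1 ≤ n)]; ring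
    rw [← Real.rpow_natCast ((2:ℝ) ^ (-(1:ℝ) / ((n:ℝ) - 1))) (n - 1),
      ← Real.rpow_mul (by norm_num), hcast]
    rw [show -(1:ℝ) / ((n:ℝ) - 1) * ((n:ℝ) - 1) = -1 by field_simp]
    rw [Real.rpow_neg_one]; norm_num
  have hsucc : n - 1 = (n - 2) + 1 := by omega
  rw [mul_pow, hpow2, hfrac, hsucc, pow_succ]
  ring

/-- Triangular transmitter density `f_X(x) = 4x` on `[0,1/2]`, `4(1-x)` on
`[1/2,1]`: for `n ≥ 3`, `∫₀¹ f_X(x)^{-1/(n-1)} dx = ((n-1)/(n-2))·2^{-1/(n-1)}`;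
consequently the optimal miss probability equals
`P_f^{opt} = (1-2r_s)^n / (((n-1)/(n-2))·2^{-1/(n-1)})^{n-1}`, whose
denominator converges to `e/2` as `n → ∞`. -/
theorem triangular_density_miss_probability :
    (∀ n : ℕ, 3 ≤ n →
      ∫ x in Set.Icc (0:ℝ) 1,
          (if x ≤ 1/2 then 4 * x else 4 * (1 - x)) ^ (-(1:ℝ) / (n - 1))
        = ((n : ℝ) - 1) / ((n : ℝ) - 2) * (2:ℝ) ^ (-(1:ℝ) / ((n : ℝ) - 1))) ∧
    (∀ n : ℕ, 3 ≤ n → ∀ rs : ℝ,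
      (1 - 2 * rs) ^ n
          / (∫ x in Set.Icc (0:ℝ) 1,
              (if x ≤ 1/2 then 4 * x else 4 * (1 - x)) ^ (-(1:ℝ) / (n - 1))) ^ (n - 1)
        = (1 - 2 * rs) ^ n
          / (((n : ℝ) - 1) / ((n : ℝ) - 2)
              * (2:ℝ) ^ (-(1:ℝ) / ((n : ℝ) - 1))) ^ (n - 1)) ∧
    Tendsto
      (fun n : ℕ =>
        (((n : ℝ) - 1) / ((n : ℝ) - 2)
            * (2:ℝ) ^ (-(1:ℝ) / ((n : ℝ) - 1))) ^ (n - 1))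
      atTop (nhds (Real.exp 1 / 2)) := by
  refine ⟨tri_integral, fun n hn rs => by rw [tri_integral n hn], tri_tendsto⟩
end
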